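/- arXiv:1710.04171 — 2 statements merged into one kernel-verified Lean document; each statement's English description precedes it below -/
import Mathlib

section
/- The Sauer–Shelah lemma: if a family S of subsets of X has VC-dimension at most d, then for every finite A ⊆ X of size n, the number of distinct traces {S ∩ A : S ∈ S} is at most ∑_{i=0}^{d} C(n, i). -/
/-- A finite set `A` is shattered by a family `𝒮` of subsets of `X`. -/
def Shatters {X : Type*} (𝒮 : Set (Set X)) (A : Finset X) : Prop :=
  ∀ B ⊆ A, ∃ s ∈ 𝒮, s ∩ (A : Set X) = (B : Set X)

/-- The Sauer–Shelah lemma: if a family `𝒮` of subsets of `X` has VC-dimension at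
most `d` (no shattered set has more than `d` elements), then for every finite
`A ⊆ X` with `|A| = n`, the number of distinct traces `{s ∩ A : s ∈ 𝒮}` is at
most `∑_{i=0}^{d} C(n, i)`. -/
theorem sauer_shelah {X : Type*} (𝒮 : Set (Set X)) (d : ℕ)
    (h : ∀ B : Finset X, Shatters 𝒮 B → B.card ≤ d)
    (A : Finset X) (n : ℕ) (hA : A.card = n) :
    Set.ncard {B : Set X | ∃ s ∈ 𝒮, s ∩ (A : Set X) = B} ≤
      ∑ i ∈ Finset.range (d + 1), n.choose i := by
  classical
  set α := {x // x ∈ A}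
  have hval : Function.Injective (Subtype.val : α → X) := Subtype.val_injective
  -- the trace family as a finset of finsets of the subtype
  set 𝒯 : Finset (Finset α) :=
    Finset.univ.filter (fun T => ∃ s ∈ 𝒮, s ∩ (A : Set X) = Subtype.val '' (T : Set α)) with h𝒯
  have hmem : ∀ T : Finset α, T ∈ 𝒯 ↔ ∃ s ∈ 𝒮, s ∩ (A : Set X) = Subtype.val '' (T : Set α) := by
    intro T; simp [h𝒯]
  -- the set of traces equals the image of 𝒯 under T ↦ val '' T
  have himg : {B : Set X | ∃ s ∈ 𝒮, s ∩ (A : Set X) = B} =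
      (fun T : Finset α => Subtype.val '' (T : Set α)) '' (𝒯 : Set (Finset α)) := by
    ext B
    constructor
    · rintro ⟨s, hs, rfl⟩
      have hsub : s ∩ (A : Set X) ⊆ (A : Set X) := Set.inter_subset_right
      refine ⟨(A.attach.filter (fun x : α => (x : X) ∈ s)), ?_, ?_⟩
      · rw [Finset.mem_coe, hmem]
        refine ⟨s, hs, ?_⟩
        ext x
        simp only [Finset.coe_filter, Set.mem_image, Set.mem_setOf_eq, Set.mem_inter_iff,
          Finset.mem_coe, Finset.mem_attach, true_and]
        constructor
        · rintro ⟨hxs, hxA⟩; exact ⟨⟨x, hxA⟩, ⟨Finset.mem_attach _ _, hxs⟩, rfl⟩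
        · rintro ⟨⟨y, hy⟩, hys, rfl⟩; exact ⟨hys.2, hy⟩
      · ext x
        simp only [Finset.coe_filter, Set.mem_image, Set.mem_setOf_eq, Set.mem_inter_iff,
          Finset.mem_coe, Finset.mem_attach, true_and]
        constructor
        · rintro ⟨⟨y, hy⟩, hys, rfl⟩; exact ⟨hys.2, hy⟩
        · rintro ⟨hxs, hxA⟩; exact ⟨⟨x, hxA⟩, ⟨Finset.mem_attach _ _, hxs⟩, rfl⟩
    · rintro ⟨T, hT, rfl⟩
      rw [Finset.mem_coe, hmem] at hT
      obtain ⟨s, hs, hst⟩ := hT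
      exact ⟨s, hs, hst⟩
  -- bound ncard by card of 𝒯
  have hcard : Set.ncard {B : Set X | ∃ s ∈ 𝒮, s ∩ (A : Set X) = B} ≤ 𝒯.card := by
    rw [himg]
    calc ((fun T : Finset α => Subtype.val '' (T : Set α)) '' (𝒯 : Set (Finset α))).ncard
        ≤ (𝒯 : Set (Finset α)).ncard := Set.ncard_image_le 𝒯.finite_toSet
      _ = 𝒯.card := by simp
  refine hcard.trans ?_
  -- vcDim bound
  have hvc : 𝒯.vcDim ≤ d := by
    rw [Finset.vcDim]
    refine Finset.sup_le fun T hT => ?_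
    rw [Finset.mem_shatterer] at hT
    have hsh : Shatters 𝒮 (T.image Subtype.val) := by
      intro B hB
      -- pull B back to a finset of α
      set t : Finset α := T.filter (fun x => (x : X) ∈ B) with ht
      have htT : t ⊆ T := Finset.filter_subset _ _
      obtain ⟨u, hu, hTu⟩ := hT htT
      rw [hmem] at hu
      obtain ⟨s, hs, hsu⟩ := hu
      refine ⟨s, hs, ?_⟩
      have hBT : (B : Set X) = Subtype.val '' (t : Set α) := by
        ext x
        simp only [ht, Finset.coe_filter, Set.mem_image, Set.mem_setOf_eq, Finset.mem_coe]
        constructor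
        · intro hxB
          have hxT : x ∈ T.image Subtype.val := hB hxB
          obtain ⟨y, hy, rfl⟩ := Finset.mem_image.1 hxT
          exact ⟨y, ⟨hy, hxB⟩, rfl⟩
        · rintro ⟨y, ⟨hyT, hyB⟩, rfl⟩; exact hyB
      have hTA : Subtype.val '' (T : Set α) ⊆ (A : Set X) := by
        rintro x ⟨⟨y, hy⟩, _, rfl⟩; exact hy
      calc s ∩ ((T.image Subtype.val : Finset X) : Set X)
          = s ∩ (Subtype.val '' (T : Set α)) := by rw [Finset.coe_image]
        _ = (s ∩ (A : Set X)) ∩ Subtype.val '' (T : Set α) := by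
            rw [Set.inter_assoc, Set.inter_eq_self_of_subset_right hTA]
        _ = Subtype.val '' (u : Set α) ∩ Subtype.val '' (T : Set α) := by rw [hsu]
        _ = Subtype.val '' ((u : Set α) ∩ (T : Set α)) := (Set.image_inter hval).symm
        _ = Subtype.val '' (t : Set α) := by
            rw [Set.inter_comm, ← Finset.coe_inter, hTu]
        _ = (B : Set X) := hBT.symm
    have := h _ hsh
    rwa [Finset.card_image_of_injective _ hval] at this
  -- apply Sauer-Shelah from mathlib
  have hn : Fintype.card α = n := by rw [Fintype.card_coe, hA]
  calc 𝒯.card ≤ 𝒯.shatterer.card := Finset.card_le_card_shatterer 𝒯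
    _ ≤ ∑ k ∈ Finset.Iic 𝒯.vcDim, (Fintype.card α).choose k :=
        Finset.card_shatterer_le_sum_vcDim
    _ ≤ ∑ k ∈ Finset.range (d + 1), n.choose k := by
        rw [hn]
        have : Finset.range (d + 1) = Finset.Iic d := by
          ext k; simp [Nat.lt_succ_iff]
        rw [this]
        exact Finset.sum_le_sum_of_subset (Finset.Iic_subset_Iic.2 hvc)
end

section
/- For t ∈ ℤ: t ∈ T if and only if there exist integers t', r, r', s with t' ∈ T', 1 ≤ r ≤ d, 0 ≤ r' < 2^d, t' = r + d(2^d s + r'), and t = r + d(s + r'), where T = ⊔_{i=1}^d (i + d J_i) and T' = ⊔_{i=1}^d (i + d J'_i), with J_i = {x + 2^i y : 0 ≤ x < 2^{i−1}, 0 ≤ y < 2^{d−i}} and J'_i = {2^d x + 2^i y : 0 ≤ x < 2^{i−1}, 0 ≤ y < 2^{d−i}}. -/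
/-- Let `J_i = {x + 2^i y : 0 ≤ x < 2^(i-1), 0 ≤ y < 2^(d-i)}`,
`J'_i = {2^d x + 2^i y : 0 ≤ x < 2^(i-1), 0 ≤ y < 2^(d-i)}`,
`T = ⊔_{i=1}^d (i + d J_i)` and `T' = ⊔_{i=1}^d (i + d J'_i)`.  Then for `t ∈ ℤ`:
`t ∈ T` iff there exist integers `t', r, r', s` with `t' ∈ T'`, `1 ≤ r ≤ d`,
`0 ≤ r' < 2^d`, `t' = r + d(2^d s + r')` and `t = r + d(s + r')`. -/
theorem mem_T_iff (d : ℕ) (hd : 1 ≤ d) (T T' : Set ℤ)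
    (hT : T = {t : ℤ | ∃ i x y : ℕ, 1 ≤ i ∧ i ≤ d ∧ x < 2 ^ (i - 1) ∧ y < 2 ^ (d - i) ∧
      t = (i : ℤ) + (d : ℤ) * ((x : ℤ) + 2 ^ i * (y : ℤ))})
    (hT' : T' = {t : ℤ | ∃ i x y : ℕ, 1 ≤ i ∧ i ≤ d ∧ x < 2 ^ (i - 1) ∧ y < 2 ^ (d - i) ∧
      t = (i : ℤ) + (d : ℤ) * (2 ^ d * (x : ℤ) + 2 ^ i * (y : ℤ))}) :
    ∀ t : ℤ, t ∈ T ↔ ∃ t' r r' s : ℤ, t' ∈ T' ∧ 1 ≤ r ∧ r ≤ (d : ℤ) ∧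
      0 ≤ r' ∧ r' < 2 ^ d ∧ t' = r + (d : ℤ) * (2 ^ d * s + r') ∧
      t = r + (d : ℤ) * (s + r') := by
  subst hT hT'
  intro t
  constructor
  · rintro ⟨i, x, y, hi1, hid, hx, hy, ht⟩
    have hpow : (2 : ℤ) ^ i * (y : ℤ) < 2 ^ d := by
      have h1 : (y : ℤ) < 2 ^ (d - i) := by exact_mod_cast hy
      have h2 : (2 : ℤ) ^ i * (y : ℤ) < 2 ^ i * 2 ^ (d - i) := by
        apply mul_lt_mul_of_pos_left h1 (by positivity)
      rw [← pow_add] at h2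
      rwa [Nat.add_sub_cancel' hid] at h2
    refine ⟨(i : ℤ) + (d : ℤ) * (2 ^ d * (x : ℤ) + 2 ^ i * (y : ℤ)), i, 2 ^ i * (y : ℤ),
      x, ⟨i, x, y, hi1, hid, hx, hy, rfl⟩, by exact_mod_cast hi1, by exact_mod_cast hid,
      by positivity, hpow, rfl, ?_⟩
    rw [ht]
  · rintro ⟨t', r, r', s, ⟨i, x, y, hi1, hid, hx, hy, ht'⟩, hr1, hrd, hr'0, hr'd, heq, ht⟩
    have hdpos : (0 : ℤ) < d := by exact_mod_cast hd
    -- i = r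
    have hdvd : (d : ℤ) ∣ ((i : ℤ) - r) := by
      refine ⟨(2 ^ d * s + r') - (2 ^ d * (x : ℤ) + 2 ^ i * (y : ℤ)), ?_⟩
      rw [ht'] at heq; linarith [heq]
    have hir : (i : ℤ) = r := by
      rcases hdvd with ⟨k, hk⟩
      have hi1' : (1 : ℤ) ≤ i := by exact_mod_cast hi1
      have hid' : (i : ℤ) ≤ d := by exact_mod_cast hid
      have hk0 : k = 0 := by nlinarith
      rw [hk0, mul_zero] at hk; linarith
    have hAB : 2 ^ d * (x : ℤ) + 2 ^ i * (y : ℤ) = 2 ^ d * s + r' := by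
      rw [ht'] at heq
      have : (d : ℤ) * (2 ^ d * (x : ℤ) + 2 ^ i * (y : ℤ)) = (d : ℤ) * (2 ^ d * s + r') := by
        linarith
      exact mul_left_cancel₀ (ne_of_gt hdpos) this
    have hpow : (2 : ℤ) ^ i * (y : ℤ) < 2 ^ d := by
      have h1 : (y : ℤ) < 2 ^ (d - i) := by exact_mod_cast hy
      have h2 : (2 : ℤ) ^ i * (y : ℤ) < 2 ^ i * 2 ^ (d - i) := by
        apply mul_lt_mul_of_pos_left h1 (by positivity)
      rw [← pow_add] at h2
      rwa [Nat.add_sub_cancel' hid] at h2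
    have hpow0 : (0 : ℤ) ≤ 2 ^ i * (y : ℤ) := by positivity
    -- uniqueness of quotient/remainder
    have hdvd2 : (2 : ℤ) ^ d ∣ (2 ^ i * (y : ℤ) - r') := ⟨s - x, by linarith⟩
    have hrem : (2 : ℤ) ^ i * (y : ℤ) = r' := by
      rcases hdvd2 with ⟨k, hk⟩
      have hN : (0 : ℤ) < 2 ^ d := by positivity
      have hk0 : k = 0 := by nlinarith
      rw [hk0, mul_zero] at hk; linarith
    have hxs : (x : ℤ) = s := by
      have hN : (0 : ℤ) < 2 ^ d := by positivity
      have : (2 : ℤ) ^ d * (x : ℤ) = 2 ^ d * s := by linarith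
      exact mul_left_cancel₀ (ne_of_gt hN) this
    exact ⟨i, x, y, hi1, hid, hx, hy, by rw [ht, ← hir, ← hxs, ← hrem]⟩
end
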